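/- arXiv:2010.15345 — 2 statements merged into one kernel-verified Lean document; each statement's English description precedes it below -/
import Mathlib

section
/- (Corollary 2.5) Suppose k = 0 (so Υₙ = 1 for all n) and let f(z) = z + Σ_{n≥2} aₙ zⁿ belong to the class B_Σ(1, φ). Assume 3B₁²·C(δ,3) − 4(B₂−B₁)·C(δ,2)² ≠ 0. Then |a₂| ≤ B₁·√B₁ / √( |3B₁²·C(δ,3) − 4(B₂−B₁)·C(δ,2)²| ) and |a₃| ≤ B₁/(3C(δ,3)) + ( B₁/(2C(δ,2)) )². -/
open Complex

noncomputable section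

/-- The open unit disk in ℂ. -/
def unitDisk : Set ℂ := Metric.ball 0 1

/-- Υₙ = (λ(α+β−1)(n−1))^k. -/
def Ups (lam al be : ℝ) (k n : ℕ) : ℝ := (lam * (al + be - 1) * ((n : ℝ) - 1)) ^ k

/-- C(δ,n) = Γ(n+δ)/(Γ(n)·Γ(δ+1)). -/
def Cdel (d : ℝ) (n : ℕ) : ℝ :=
  Real.Gamma ((n : ℝ) + d) / (Real.Gamma (n : ℝ) * Real.Gamma (d + 1))

/-- The operator D applied to a function with Taylor coefficients `a`
(where `a 0 = 0`, `a 1 = 1`): (Df)(z) = z + Σ_{n≥2} Υₙ·C(δ,n)·aₙ zⁿ. -/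
def Dop (lam al be d : ℝ) (k : ℕ) (a : ℕ → ℂ) : ℂ → ℂ := fun z =>
  z + ∑' n : ℕ, if 2 ≤ n then (Ups lam al be k n : ℂ) * (Cdel d n : ℂ) * a n * z ^ n else 0

/-- Subordination F ≺ G on the unit disk. -/
def Subord (F G : ℂ → ℂ) : Prop :=
  ∃ u : ℂ → ℂ, AnalyticOnNhd ℂ u unitDisk ∧ u 0 = 0 ∧
    (∀ z ∈ unitDisk, ‖u z‖ < 1) ∧ ∀ z ∈ unitDisk, F z = G (u z)

/-- z ↦ (z·F′(z)/F(z))·((F(z)/z)^γ), with the value 1 at the origin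
(principal-branch complex power). -/
def bazFun (g : ℝ) (F : ℂ → ℂ) : ℂ → ℂ := fun z =>
  if z = 0 then 1 else (z * deriv F z / F z) * ((F z / z) ^ (g : ℂ))

/-- `f` is analytic on the unit disk, normalized, with Taylor coefficients `a`
(`a 0 = 0`, `a 1 = 1`). -/
def IsInA (f : ℂ → ℂ) (a : ℕ → ℂ) : Prop :=
  AnalyticOnNhd ℂ f unitDisk ∧ a 0 = 0 ∧ a 1 = 1 ∧
    ∀ z ∈ unitDisk, HasSum (fun n => a n * z ^ n) (f z)

/-- Membership of `f` (with coefficients `a`, and inverse `g` with coefficients `b`)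
in the class B_Σ(γ, φ). -/
def MemB (lam al be d : ℝ) (k : ℕ) (g : ℝ) (φ : ℂ → ℂ)
    (f gf : ℂ → ℂ) (a b : ℕ → ℂ) : Prop :=
  IsInA f a ∧ Set.InjOn f unitDisk ∧
  IsInA gf b ∧ Set.InjOn gf unitDisk ∧
  (∀ w : ℂ, ‖w‖ < 1 / 4 → f (gf w) = w) ∧
  b 2 = -a 2 ∧ b 3 = 2 * a 2 ^ 2 - a 3 ∧
  (∀ z ∈ unitDisk, z ≠ 0 → Dop lam al be d k a z ≠ 0) ∧
  (∀ z ∈ unitDisk, z ≠ 0 → Dop lam al be d k b z ≠ 0) ∧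
  Subord (bazFun g (Dop lam al be d k a)) φ ∧
  Subord (bazFun g (Dop lam al be d k b)) φ

/-!
For `k = 0` and `γ = 1` the expression defining the class collapses to `(Df)′`, so
`(Df)′ = φ ∘ u` and `(Dg)′ = φ ∘ v` for Schwarz functions `u`, `v`. Since `Df` has Taylor
coefficients `C(δ,n) aₙ`, comparing the coefficients of `z` and `z²` gives
`2 C(δ,2) a₂ = B₁ u′(0)` and `6 C(δ,3) a₃ = 2 B₂ u′(0)² + B₁ u″(0)`, and the same for `g` with
`b₂ = -a₂`, `b₃ = 2a₂² - a₃`. The Schwarz–Pick inequality applied to `u(z)/z` gives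
`|u″(0)| ≤ 2 (1 - |u′(0)|²)`. Adding the two third-order relations eliminates `a₃` and bounds
`a₂²`; subtracting them bounds `a₃ - a₂²`, and `|a₂| ≤ B₁ / (2 C(δ,2))` gives the rest.
-/

open Metric Filter Set Topology ComplexConjugate

theorem hasFPowerSeriesOnBall_ofScalars_of_hasSum {F : ℂ → ℂ} {A : ℕ → ℂ}
    (h : ∀ z ∈ ball (0 : ℂ) 1, HasSum (fun n => A n * z ^ n) (F z)) :
    HasFPowerSeriesOnBall F (FormalMultilinearSeries.ofScalars ℂ A) 0 1 where
  r_le := by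
    refine ENNReal.le_of_forall_nnreal_lt fun r hr => ?_
    have hr1 : (r : ℝ) < 1 := by exact_mod_cast hr
    have hz : ((r : ℝ) : ℂ) ∈ ball (0 : ℂ) 1 := by simpa [abs_of_nonneg r.coe_nonneg] using hr1
    refine FormalMultilinearSeries.le_radius_of_tendsto _ (l := 0) ?_
    simpa [FormalMultilinearSeries.ofScalars_norm, abs_of_nonneg r.coe_nonneg] using
      (h _ hz).summable.tendsto_atTop_zero.norm
  r_pos := one_pos
  hasSum {y} hy := by
    simpa [FormalMultilinearSeries.ofScalars_apply_eq, mul_comm]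
      using h y (by rwa [Metric.mem_eball, edist_dist, ENNReal.ofReal_lt_one] at hy)

theorem iteratedDeriv_zero_eq_factorial_mul_of_hasSum {F : ℂ → ℂ} {A : ℕ → ℂ}
    (h : ∀ z ∈ ball (0 : ℂ) 1, HasSum (fun n => A n * z ^ n) (F z)) (n : ℕ) :
    iteratedDeriv n F 0 = n.factorial * A n := by
  have H := (hasFPowerSeriesOnBall_ofScalars_of_hasSum h).factorial_smul 1 n
  rw [iteratedDeriv_eq_iteratedFDeriv, ← H, FormalMultilinearSeries.ofScalars_apply_eq]
  simp [nsmul_eq_mul, mul_comm]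

theorem iteratedDeriv_two_three_of_deriv_eventuallyEq_comp {𝕜 : Type*}
    [NontriviallyNormedField 𝕜] [CompleteSpace 𝕜] {F φ u : 𝕜 → 𝕜} {x : 𝕜}
    (hφ : AnalyticAt 𝕜 φ (u x)) (hu : AnalyticAt 𝕜 u x) (h : deriv F =ᶠ[𝓝 x] φ ∘ u) :
    iteratedDeriv 2 F x = deriv φ (u x) * deriv u x ∧
      iteratedDeriv 3 F x =
        iteratedDeriv 2 φ (u x) * deriv u x ^ 2 + deriv φ (u x) * iteratedDeriv 2 u x := by
  rw [iteratedDeriv_succ' (n := 1), iteratedDeriv_succ' (n := 2), h.iteratedDeriv_eq,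
    h.iteratedDeriv_eq, iteratedDeriv_one, deriv_comp x hφ.differentiableAt hu.differentiableAt]
  exact ⟨rfl, iteratedDeriv_comp_two hφ.contDiffAt hu.contDiffAt⟩

theorem norm_sub_le_norm_one_sub_conj_mul {a w : ℂ} (ha : ‖a‖ ≤ 1) (hw : ‖w‖ ≤ 1) :
    ‖w - a‖ ≤ ‖1 - conj a * w‖ := by
  have key : ‖1 - conj a * w‖ ^ 2 - ‖w - a‖ ^ 2 = (1 - ‖a‖ ^ 2) * (1 - ‖w‖ ^ 2) := by
    simp only [Complex.sq_norm, normSq_apply, sub_re, sub_im, mul_re, mul_im, one_re, one_im,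
      conj_re, conj_im]
    ring
  rw [← sq_le_sq₀ (norm_nonneg _) (norm_nonneg _)]
  nlinarith [mul_nonneg (sub_nonneg.2 (pow_le_one₀ (n := 2) (norm_nonneg a) ha))
    (sub_nonneg.2 (pow_le_one₀ (n := 2) (norm_nonneg w) hw))]

theorem norm_deriv_le_one_sub_sq_of_norm_lt_one {h : ℂ → ℂ}
    (hd : DifferentiableOn ℂ h (ball 0 1)) (h_maps : MapsTo h (ball 0 1) (closedBall 0 1))
    (h0 : ‖h 0‖ < 1) : ‖deriv h 0‖ ≤ 1 - ‖h 0‖ ^ 2 := by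
  set a := h 0
  have hden : ∀ z ∈ ball (0 : ℂ) 1, 1 - conj a * h z ≠ 0 := by
    intro z hz hzero
    have : ‖conj a * h z‖ < 1 := by
      rw [norm_mul, norm_conj]
      exact mul_lt_one_of_nonneg_of_lt_one_left (norm_nonneg _) h0
        (mem_closedBall_zero_iff.1 (h_maps hz))
    rw [← sub_eq_zero.1 hzero, norm_one] at this
    exact this.false
  -- The disk automorphism `w ↦ (w - a) / (1 - conj a * w)` moves `h 0` to the origin.
  set g : ℂ → ℂ := fun z => (h z - a) / (1 - conj a * h z)
  have hg_maps : MapsTo g (ball 0 1) (closedBall (g 0) 1) := by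
    intro z hz
    simp only [g, a, sub_self, zero_div, mem_closedBall_zero_iff, norm_div]
    exact div_le_one_of_le₀ (norm_sub_le_norm_one_sub_conj_mul h0.le
      (mem_closedBall_zero_iff.1 (h_maps hz))) (norm_nonneg _)
  have hg_diff : DifferentiableOn ℂ g (ball 0 1) :=
    (hd.sub_const a).fun_div ((differentiableOn_const 1).sub (hd.const_mul _)) hden
  have hh : HasDerivAt h (deriv h 0) 0 :=
    (hd.differentiableAt (ball_mem_nhds 0 one_pos)).hasDerivAt
  have hpos : 0 < 1 - ‖a‖ ^ 2 := by nlinarith [norm_nonneg a]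
  have hg_deriv : deriv g 0 = deriv h 0 / ((1 - ‖a‖ ^ 2 : ℝ) : ℂ) := by
    have hconj : 1 - conj a * a = ((1 - ‖a‖ ^ 2 : ℝ) : ℂ) := by
      rw [mul_comm, mul_conj, normSq_eq_norm_sq]; push_cast; ring
    have hne : ((1 - ‖a‖ ^ 2 : ℝ) : ℂ) ≠ 0 := ofReal_ne_zero.2 hpos.ne'
    rw [((hh.sub_const a).fun_div ((hh.const_mul (conj a)).const_sub 1)
      (hden 0 (mem_ball_self one_pos))).deriv, sub_self, zero_mul, sub_zero, hconj]
    field_simp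
  have := norm_deriv_le_one_of_mapsTo_ball hg_diff hg_maps one_pos
  rwa [hg_deriv, norm_div, norm_real, Real.norm_of_nonneg hpos.le, div_le_one hpos] at this

theorem norm_deriv_le_one_sub_sq_of_mapsTo_ball {h : ℂ → ℂ}
    (hd : DifferentiableOn ℂ h (ball 0 1)) (h_maps : MapsTo h (ball 0 1) (closedBall 0 1)) :
    ‖deriv h 0‖ ≤ 1 - ‖h 0‖ ^ 2 := by
  have h0mem : (0 : ℂ) ∈ ball (0 : ℂ) 1 := mem_ball_self one_pos
  rcases (mem_closedBall_zero_iff.1 (h_maps h0mem)).lt_or_eq with h0 | h0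
  · exact norm_deriv_le_one_sub_sq_of_norm_lt_one hd h_maps h0
  · have hmax : IsMaxOn (norm ∘ h) (ball 0 1) 0 := fun z hz => by
      simpa [h0] using h_maps hz
    have hconst : h =ᶠ[𝓝 0] fun _ => h 0 := eventuallyEq_of_mem (ball_mem_nhds 0 one_pos)
      (Complex.eqOn_of_isPreconnected_of_isMaxOn_norm (convex_ball 0 1).isPreconnected
        isOpen_ball hd h0mem hmax)
    simp [hconst.deriv_eq, h0]

theorem norm_iteratedDeriv_two_le_of_mapsTo_ball {u : ℂ → ℂ}
    (hd : DifferentiableOn ℂ u (ball 0 1)) (h_maps : MapsTo u (ball 0 1) (closedBall 0 1))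
    (hu0 : u 0 = 0) : ‖iteratedDeriv 2 u 0‖ ≤ 2 * (1 - ‖deriv u 0‖ ^ 2) := by
  have hslope := (hd.analyticAt (ball_mem_nhds 0 one_pos)).hasFPowerSeriesAt
    |>.has_fpower_series_dslope_fslope
  have hslope_deriv : deriv (dslope u 0) 0 = iteratedDeriv 2 u 0 / 2 := by
    rw [hslope.deriv]
    simp
  have hslope_maps : MapsTo (dslope u 0) (ball 0 1) (closedBall 0 1) := fun z hz => by
    simpa using norm_dslope_le_div_of_mapsTo_ball (c := 0) hd (by rwa [hu0]) hz
  have := norm_deriv_le_one_sub_sq_of_mapsTo_ball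
    ((differentiableOn_dslope (ball_mem_nhds 0 one_pos)).2 hd) hslope_maps
  rw [hslope_deriv, dslope_same, norm_div, Complex.norm_two] at this
  linarith

theorem summable_mul_mul_pow_of_summable {c : ℕ → ℝ} {A : ℕ → ℂ} (hc0 : ∀ n, 0 ≤ c n)
    (hc : ∀ t : ℝ, 0 ≤ t → t < 1 → Summable fun n => c n * t ^ n)
    (hA : ∀ z ∈ ball (0 : ℂ) 1, Summable fun n => A n * z ^ n) {z : ℂ}
    (hz : z ∈ ball (0 : ℂ) 1) : Summable fun n => (c n : ℂ) * A n * z ^ n := by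
  obtain ⟨ρ, hzρ, hρ1⟩ := exists_between (mem_ball_zero_iff.1 hz)
  have hρ0 : 0 < ρ := (norm_nonneg z).trans_lt hzρ
  have hρ : ((ρ : ℝ) : ℂ) ∈ ball (0 : ℂ) 1 := by
    rwa [mem_ball_zero_iff, norm_real, Real.norm_of_nonneg hρ0.le]
  obtain ⟨M, hM⟩ := ((hA _ hρ).tendsto_atTop_zero.norm).bddAbove_range
  refine .of_norm_bounded ((hc (‖z‖ / ρ) (by positivity)
    ((div_lt_one hρ0).2 hzρ)).mul_left M) fun n => ?_
  have hMn : ‖A n‖ * ρ ^ n ≤ M := by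
    simpa [Real.norm_of_nonneg hρ0.le] using hM (mem_range_self n)
  calc ‖(c n : ℂ) * A n * z ^ n‖ = ‖A n‖ * ρ ^ n * (c n * (‖z‖ / ρ) ^ n) := by
        rw [norm_mul, norm_mul, norm_pow, norm_real, Real.norm_of_nonneg (hc0 n), div_pow]
        field_simp
    _ ≤ M * (c n * (‖z‖ / ρ) ^ n) := by gcongr; exact mul_nonneg (hc0 n) (by positivity)

theorem cdel_nonneg {d : ℝ} (hd : 0 ≤ d) (n : ℕ) : 0 ≤ Cdel d n :=
  div_nonneg (Real.Gamma_nonneg_of_nonneg (by positivity))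
    (mul_nonneg (Real.Gamma_nonneg_of_nonneg n.cast_nonneg)
      (Real.Gamma_nonneg_of_nonneg (by positivity)))

theorem cdel_pos {d : ℝ} (hd : 0 ≤ d) {n : ℕ} (hn : n ≠ 0) : 0 < Cdel d n := by
  have hn' : (0 : ℝ) < n := by positivity
  exact div_pos (Real.Gamma_pos_of_pos (by positivity))
    (mul_pos (Real.Gamma_pos_of_pos hn') (Real.Gamma_pos_of_pos (by positivity)))

theorem cdel_one {d : ℝ} (hd : 0 ≤ d) : Cdel d 1 = 1 := by
  have := (Real.Gamma_pos_of_pos (by positivity : 0 < d + 1)).ne'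
  simp [Cdel, add_comm, this]

theorem cdel_succ {d : ℝ} (hd : 0 ≤ d) {n : ℕ} (hn : n ≠ 0) :
    Cdel d (n + 1) = (n + d) / n * Cdel d n := by
  have hn' : (0 : ℝ) < n := by positivity
  rw [Cdel, Cdel, Nat.cast_succ, add_right_comm, Real.Gamma_add_one (by positivity),
    Real.Gamma_add_one hn'.ne']
  field_simp

theorem summable_cdel_mul_pow {d t : ℝ} (hd : 0 ≤ d) (ht0 : 0 ≤ t) (ht1 : t < 1) :
    Summable fun n : ℕ => Cdel d n * t ^ n := by
  have hlim : Tendsto (fun n : ℕ => (n + d) / n * t) atTop (𝓝 t) := by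
    have : Tendsto (fun n : ℕ => (1 + d / n) * t) atTop (𝓝 t) := by
      simpa using ((tendsto_const_div_atTop_nhds_zero_nat d).const_add 1).mul_const t
    refine this.congr' ?_
    filter_upwards [eventually_ne_atTop 0] with n hn
    field_simp
  refine summable_of_ratio_norm_eventually_le (r := (1 + t) / 2) (by linarith) ?_
  filter_upwards [eventually_ne_atTop 0, hlim.eventually_le_const (by linarith : t < (1 + t) / 2)]
    with n hn hratio
  rw [Real.norm_of_nonneg (mul_nonneg (cdel_nonneg hd _) (pow_nonneg ht0 _)),
    Real.norm_of_nonneg (mul_nonneg (cdel_nonneg hd _) (pow_nonneg ht0 _)), cdel_succ hd hn,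
    pow_succ]
  calc (n + d) / n * Cdel d n * (t ^ n * t) = (n + d) / n * t * (Cdel d n * t ^ n) := by ring
    _ ≤ (1 + t) / 2 * (Cdel d n * t ^ n) := by
      gcongr; exact mul_nonneg (cdel_nonneg hd _) (pow_nonneg ht0 _)

theorem hasSum_dop_k_zero (lam al be : ℝ) {d : ℝ} (hd : 0 ≤ d) {f : ℂ → ℂ} {a : ℕ → ℂ}
    (ha : IsInA f a) {z : ℂ} (hz : z ∈ unitDisk) :
    HasSum (fun n => (Cdel d n : ℂ) * a n * z ^ n) (Dop lam al be d 0 a z) := by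
  obtain ⟨-, ha0, ha1, hsum⟩ := ha
  have hS : HasSum (fun n => (Cdel d n : ℂ) * a n * z ^ n) _ :=
    (summable_mul_mul_pow_of_summable (cdel_nonneg hd) (fun _ => summable_cdel_mul_pow hd)
      (fun w hw => (hsum w hw).summable) hz).hasSum
  have htail : (fun n => (Cdel d n : ℂ) * a n * z ^ n - if n = 1 then z else 0) =
      fun n => if 2 ≤ n then (Ups lam al be 0 n : ℂ) * Cdel d n * a n * z ^ n else 0 := by
    funext n
    rcases n with _ | _ | n
    · simp [ha0]
    · simp [ha1, cdel_one hd]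
    · simp [Ups]
  have h := hS.sub (hasSum_ite_eq 1 z)
  rw [htail] at h
  rwa [Dop, h.tsum_eq, add_sub_cancel]

theorem bazFun_one_apply {F : ℂ → ℂ} {z : ℂ} (hz : z ≠ 0) (hF : F z ≠ 0) :
    bazFun 1 F z = deriv F z := by
  rw [bazFun, if_neg hz, ofReal_one, cpow_one]
  field_simp

theorem exists_coeff_relations_of_subord {lam al be d : ℝ} (hd : 0 ≤ d) {B : ℕ → ℝ}
    {φ f : ℂ → ℂ} {a : ℕ → ℂ} (hφ : ∀ z ∈ unitDisk, HasSum (fun n => (B n : ℂ) * z ^ n) (φ z))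
    (ha : IsInA f a) (hD : ∀ z ∈ unitDisk, z ≠ 0 → Dop lam al be d 0 a z ≠ 0)
    (hS : Subord (bazFun 1 (Dop lam al be d 0 a)) φ) :
    ∃ c e : ℂ, ‖e‖ ≤ 2 * (1 - ‖c‖ ^ 2) ∧ 2 * (Cdel d 2 : ℂ) * a 2 = B 1 * c ∧
      6 * (Cdel d 3 : ℂ) * a 3 = 2 * B 2 * c ^ 2 + B 1 * e := by
  obtain ⟨u, hu, hu0, hu_lt, hsub⟩ := hS
  have hF : ∀ z ∈ ball (0 : ℂ) 1, HasSum (fun n => (Cdel d n : ℂ) * a n * z ^ n)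
      (Dop lam al be d 0 a z) := fun z hz => hasSum_dop_k_zero lam al be hd ha hz
  have hF_an := (hasFPowerSeriesOnBall_ofScalars_of_hasSum hF).analyticAt
  have hφ_an : AnalyticAt ℂ φ (u 0) := by
    rw [hu0]; exact (hasFPowerSeriesOnBall_ofScalars_of_hasSum hφ).analyticAt
  have hu_an : AnalyticAt ℂ u 0 := hu 0 (mem_ball_self one_pos)
  -- `bazFun 1 F = F'` off the origin; continuity extends `F' = φ ∘ u` to the origin.
  have hderiv : deriv (Dop lam al be d 0 a) =ᶠ[𝓝 0] φ ∘ u := by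
    refine (hF_an.deriv.continuousAt.eventuallyEq_nhds_iff_eventuallyEq_nhdsNE
      (hφ_an.comp hu_an).continuousAt).1 ?_
    filter_upwards [self_mem_nhdsWithin, mem_nhdsWithin_of_mem_nhds (ball_mem_nhds 0 one_pos)]
      with z hz0 hz
    rw [Function.comp_apply, ← hsub z hz, bazFun_one_apply hz0 (hD z hz hz0)]
  obtain ⟨h2, h3⟩ := iteratedDeriv_two_three_of_deriv_eventuallyEq_comp hφ_an hu_an hderiv
  have hF2 := iteratedDeriv_zero_eq_factorial_mul_of_hasSum hF 2
  have hF3 := iteratedDeriv_zero_eq_factorial_mul_of_hasSum hF 3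
  have hφ1 := iteratedDeriv_zero_eq_factorial_mul_of_hasSum hφ 1
  have hφ2 := iteratedDeriv_zero_eq_factorial_mul_of_hasSum hφ 2
  rw [iteratedDeriv_one] at hφ1
  rw [hu0, hφ1] at h2
  rw [hu0, hφ1, hφ2] at h3
  norm_num [Nat.factorial] at hF2 hF3 h2 h3
  refine ⟨deriv u 0, iteratedDeriv 2 u 0, norm_iteratedDeriv_two_le_of_mapsTo_ball
    hu.differentiableOn (fun z hz => mem_closedBall_zero_iff.2 (hu_lt z hz).le) hu0, ?_, ?_⟩
  · linear_combination h2 - hF2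
  · linear_combination h3 - hF3

section CoeffRelations

variable {B₁ B₂ C₂ C₃ : ℝ} {a₂ a₃ c d e e' : ℂ}

theorem norm_coeff_two_le_of_relations (hB₁ : 0 < B₁)
    (hden : 3 * B₁ ^ 2 * C₃ - 4 * (B₂ - B₁) * C₂ ^ 2 ≠ 0)
    (he : ‖e‖ ≤ 2 * (1 - ‖c‖ ^ 2)) (he' : ‖e'‖ ≤ 2 * (1 - ‖d‖ ^ 2))
    (h₂ : 2 * (C₂ : ℂ) * a₂ = B₁ * c) (h₂' : 2 * (C₂ : ℂ) * -a₂ = B₁ * d)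
    (h₃ : 6 * (C₃ : ℂ) * a₃ = 2 * B₂ * c ^ 2 + B₁ * e)
    (h₃' : 6 * (C₃ : ℂ) * (2 * a₂ ^ 2 - a₃) = 2 * B₂ * d ^ 2 + B₁ * e') :
    ‖a₂‖ ≤ B₁ * √B₁ / √|3 * B₁ ^ 2 * C₃ - 4 * (B₂ - B₁) * C₂ ^ 2| := by
  set D := 3 * B₁ ^ 2 * C₃ - 4 * (B₂ - B₁) * C₂ ^ 2
  obtain rfl : d = -c :=
    mul_left_cancel₀ (ofReal_ne_zero.2 hB₁.ne') (by linear_combination -h₂' - h₂)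
  have key : 4 * (D : ℂ) * a₂ ^ 2 = B₁ ^ 3 * ((e + 2 * c ^ 2) + (e' + 2 * c ^ 2)) := by
    simp only [D]; push_cast
    linear_combination
      (B₁ : ℂ) ^ 2 * (h₃ + h₃') - 4 * ((B₂ : ℂ) - B₁) * (2 * C₂ * a₂ + B₁ * c) * h₂
  have hsum : ‖(e + 2 * c ^ 2) + (e' + 2 * c ^ 2)‖ ≤ 4 := by
    have hterm {w : ℂ} (hw : ‖w‖ ≤ 2 * (1 - ‖c‖ ^ 2)) : ‖w + 2 * c ^ 2‖ ≤ 2 := by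
      refine (norm_add_le _ _).trans ?_
      rw [norm_mul, norm_pow, Complex.norm_two]
      linarith
    rw [norm_neg] at he'
    linarith [norm_add_le (e + 2 * c ^ 2) (e' + 2 * c ^ 2), hterm he, hterm he']
  have hbound : |D| * ‖a₂‖ ^ 2 ≤ B₁ ^ 3 := by
    have := congrArg norm key
    simp only [norm_mul, norm_pow, norm_real, Real.norm_eq_abs, abs_of_pos hB₁] at this
    norm_num at this
    nlinarith [pow_pos hB₁ 3, norm_nonneg ((e + 2 * c ^ 2) + (e' + 2 * c ^ 2))]
  have hD : 0 < |D| := abs_pos.2 hden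
  rw [← sq_le_sq₀ (norm_nonneg _) (by positivity), div_pow, mul_pow, Real.sq_sqrt hB₁.le,
    Real.sq_sqrt hD.le, le_div_iff₀ hD]
  linarith

theorem norm_coeff_three_le_of_relations (hB₁ : 0 < B₁) (hC₂ : 0 < C₂) (hC₃ : 0 < C₃)
    (he : ‖e‖ ≤ 2 * (1 - ‖c‖ ^ 2)) (he' : ‖e'‖ ≤ 2 * (1 - ‖d‖ ^ 2))
    (h₂ : 2 * (C₂ : ℂ) * a₂ = B₁ * c) (h₂' : 2 * (C₂ : ℂ) * -a₂ = B₁ * d)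
    (h₃ : 6 * (C₃ : ℂ) * a₃ = 2 * B₂ * c ^ 2 + B₁ * e)
    (h₃' : 6 * (C₃ : ℂ) * (2 * a₂ ^ 2 - a₃) = 2 * B₂ * d ^ 2 + B₁ * e') :
    ‖a₃‖ ≤ B₁ / (3 * C₃) + (B₁ / (2 * C₂)) ^ 2 := by
  obtain rfl : d = -c :=
    mul_left_cancel₀ (ofReal_ne_zero.2 hB₁.ne') (by linear_combination -h₂' - h₂)
  have hdiff : 12 * (C₃ : ℂ) * (a₃ - a₂ ^ 2) = B₁ * (e - e') := by
    linear_combination h₃ - h₃'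
  have hc : ‖c‖ ≤ 1 := by nlinarith [norm_nonneg e, norm_nonneg c]
  have ha₂ : ‖a₂‖ ≤ B₁ / (2 * C₂) := by
    have := congrArg norm h₂
    simp only [norm_mul, norm_real, Real.norm_eq_abs, abs_of_pos hB₁, abs_of_pos hC₂] at this
    norm_num at this
    rw [le_div_iff₀ (by positivity)]
    nlinarith
  have ha₃ : ‖a₃ - a₂ ^ 2‖ ≤ B₁ / (3 * C₃) := by
    have := congrArg norm hdiff
    simp only [norm_mul, norm_real, Real.norm_eq_abs, abs_of_pos hB₁, abs_of_pos hC₃] at this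
    norm_num at this
    have hee : ‖e - e'‖ ≤ 4 := by
      nlinarith [norm_sub_le e e', norm_nonneg (-c), norm_nonneg c]
    rw [le_div_iff₀ (by positivity)]
    nlinarith [norm_nonneg (a₃ - a₂ ^ 2)]
  calc ‖a₃‖ = ‖(a₃ - a₂ ^ 2) + a₂ ^ 2‖ := by rw [sub_add_cancel]
    _ ≤ ‖a₃ - a₂ ^ 2‖ + ‖a₂‖ ^ 2 := (norm_add_le _ _).trans_eq (by rw [norm_pow])
    _ ≤ B₁ / (3 * C₃) + (B₁ / (2 * C₂)) ^ 2 := by gcongr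

end CoeffRelations

theorem cor_2_5_general (α β lam δ : ℝ)
    (hδ : 0 ≤ δ)
    (B : ℕ → ℝ) (φ : ℂ → ℂ)
    (hφs : ∀ z ∈ unitDisk, HasSum (fun n => (B n : ℂ) * z ^ n) (φ z))
    (hB1 : 0 < B 1)
    (f g : ℂ → ℂ) (a b : ℕ → ℂ)
    (hmem : MemB lam α β δ 0 1 φ f g a b)
    (hden : 3 * B 1 ^ 2 * Cdel δ 3 - 4 * (B 2 - B 1) * Cdel δ 2 ^ 2 ≠ 0) :
    ‖a 2‖ ≤ B 1 * Real.sqrt (B 1) /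
      Real.sqrt |3 * B 1 ^ 2 * Cdel δ 3 - 4 * (B 2 - B 1) * Cdel δ 2 ^ 2| ∧
    ‖a 3‖ ≤ B 1 / (3 * Cdel δ 3) + (B 1 / (2 * Cdel δ 2)) ^ 2 := by
  obtain ⟨hfA, -, hgA, -, -, hb2, hb3, hDf, hDg, hSf, hSg⟩ := hmem
  obtain ⟨c, e, he, h₂, h₃⟩ := exists_coeff_relations_of_subord hδ hφs hfA hDf hSf
  obtain ⟨d, e', he', h₂', h₃'⟩ := exists_coeff_relations_of_subord hδ hφs hgA hDg hSg
  rw [hb2] at h₂'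
  rw [hb3] at h₃'
  exact ⟨norm_coeff_two_le_of_relations hB1 hden he he' h₂ h₂' h₃ h₃',
    norm_coeff_three_le_of_relations hB1 (cdel_pos hδ two_ne_zero) (cdel_pos hδ three_ne_zero)
      he he' h₂ h₂' h₃ h₃'⟩

theorem cor_2_5 (α β lam δ : ℝ)
    (hα0 : 0 < α) (hα1 : α ≤ 1) (hβ0 : 0 < β) (hβ1 : β ≤ 1)
    (hlam : 0 ≤ lam) (hδ : 0 ≤ δ)
    (B : ℕ → ℝ) (φ : ℂ → ℂ)
    (hφ : AnalyticOnNhd ℂ φ unitDisk)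
    (hφs : ∀ z ∈ unitDisk, HasSum (fun n => (B n : ℂ) * z ^ n) (φ z))
    (hB0 : B 0 = 1) (hB1 : 0 < B 1)
    (f g : ℂ → ℂ) (a b : ℕ → ℂ)
    (hmem : MemB lam α β δ 0 1 φ f g a b)
    (hden : 3 * B 1 ^ 2 * Cdel δ 3 - 4 * (B 2 - B 1) * Cdel δ 2 ^ 2 ≠ 0) :
    ‖a 2‖ ≤ B 1 * Real.sqrt (B 1) /
      Real.sqrt |3 * B 1 ^ 2 * Cdel δ 3 - 4 * (B 2 - B 1) * Cdel δ 2 ^ 2| ∧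
    ‖a 3‖ ≤ B 1 / (3 * Cdel δ 3) + (B 1 / (2 * Cdel δ 2)) ^ 2 :=
  cor_2_5_general α β lam δ hδ B φ hφs hB1 f g a b hmem hden
end
end

section
/- (Corollary 3.4) Suppose k = 0 (so Υₙ = 1 for all n). Let −1 ≤ B < A ≤ 1 and let f(z) = z + Σ_{n≥2} aₙ zⁿ belong to the class B_Σ(0, A, B). Assume (A−B)·(2C(δ,3) − C(δ,2)²) − (B+1)·C(δ,2)² ≠ 0. Then |a₂| ≤ (A−B) / √( |(A−B)·(2C(δ,3) − C(δ,2)²) − (B+1)·C(δ,2)²| ) and |a₃| ≤ (A−B)/(2C(δ,3)) + ( (A−B)/C(δ,2) )². -/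
open Complex

noncomputable section

/-!
Write `(Df)(z) = z·h(z)` with `h(0) = 1`, so that `z(Df)'/Df = 1 + z·h'/h`, and write the Schwarz
function as `u = z·v`, so that `φ(u) = 1 + z·(A-B)v/(1+Bu)`. Subordination makes `h'/h` and
`(A-B)v/(1+Bu)` agree near `0`; comparing their values and derivatives at `0` gives
`C(δ,2)a₂ = (A-B)c₁` and `2C(δ,3)a₃ - C(δ,2)²a₂² = (A-B)(c₂ - Bc₁²)`, where `c₁ = u'(0)` and
`c₂ = u''(0)/2` satisfy `|c₂| ≤ 1 - |c₁|²` (Schwarz–Pick applied to `v`). The same relations hold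
for `g`, whose coefficients are `-a₂` and `2a₂² - a₃`. Adding the two sets of relations bounds
`|a₂|²`, because `2C(δ,3) - C(δ,2)² = 1 + δ ≥ 0`; subtracting them bounds `|a₃ - a₂²|`.
-/
open Metric FormalMultilinearSeries Filter
open scoped Topology

section Schwarz

open ComplexConjugate

lemma normSq_one_sub_conj_mul_sub_normSq_sub (s ζ : ℂ) :
    Complex.normSq (1 - conj s * ζ) - Complex.normSq (ζ - s)
      = (1 - Complex.normSq s) * (1 - Complex.normSq ζ) := by
  simp only [Complex.normSq_apply, Complex.sub_re, Complex.sub_im, Complex.mul_re,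
    Complex.mul_im, Complex.conj_re, Complex.conj_im, Complex.one_re, Complex.one_im]
  ring

lemma one_sub_conj_mul_ne_zero {s ζ : ℂ} (hs : ‖s‖ < 1) (hζ : ‖ζ‖ ≤ 1) :
    1 - conj s * ζ ≠ 0 := by
  have : ‖conj s * ζ‖ < 1 := by
    rw [norm_mul, Complex.norm_conj]
    nlinarith [norm_nonneg s, norm_nonneg ζ]
  intro h
  rw [← sub_eq_zero.mp h, norm_one] at this
  exact this.false

lemma norm_mobius_le_one {s ζ : ℂ} (hs : ‖s‖ < 1) (hζ : ‖ζ‖ ≤ 1) :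
    ‖(ζ - s) / (1 - conj s * ζ)‖ ≤ 1 := by
  rw [norm_div, div_le_one (norm_pos_iff.mpr (one_sub_conj_mul_ne_zero hs hζ)),
    ← sq_le_sq₀ (norm_nonneg _) (norm_nonneg _), Complex.sq_norm, Complex.sq_norm,
    ← sub_nonneg, normSq_one_sub_conj_mul_sub_normSq_sub, Complex.normSq_eq_norm_sq,
    Complex.normSq_eq_norm_sq]
  exact mul_nonneg (by nlinarith [norm_nonneg s]) (by nlinarith [norm_nonneg ζ])

variable {v : ℂ → ℂ}

lemma norm_deriv_le_one_sub_sq_of_mapsTo_closedBall (hd : DifferentiableOn ℂ v (ball 0 1))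
    (hv : Set.MapsTo v (ball 0 1) (closedBall 0 1)) : ‖deriv v 0‖ ≤ 1 - ‖v 0‖ ^ 2 := by
  have h0 : (0 : ℂ) ∈ ball (0 : ℂ) 1 := mem_ball_self one_pos
  have hv' : ∀ z ∈ ball (0 : ℂ) 1, ‖v z‖ ≤ 1 := fun z hz => mem_closedBall_zero_iff.mp (hv hz)
  rcases (hv' 0 h0).eq_or_lt with hs | hs
  · have hconst := Complex.eqOn_of_isPreconnected_of_isMaxOn_norm
      (convex_ball (0 : ℂ) 1).isPreconnected isOpen_ball hd h0
      (fun z hz => by simpa [hs] using hv' z hz)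
    rw [(Filter.eventuallyEq_of_mem (isOpen_ball.mem_nhds h0) hconst).deriv_eq,
      show Function.const ℂ (v 0) = fun _ => v 0 from rfl, deriv_const, hs]
    norm_num
  set s := v 0
  have hden : ∀ z ∈ ball (0 : ℂ) 1, 1 - conj s * v z ≠ 0 := fun z hz =>
    one_sub_conj_mul_ne_zero hs (hv' z hz)
  have hs2 : 1 - conj s * s = ((1 - ‖s‖ ^ 2 : ℝ) : ℂ) := by
    rw [Complex.conj_mul']
    push_cast
    ring
  have hspos : 0 < 1 - ‖s‖ ^ 2 := by nlinarith [norm_nonneg s]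
  set w : ℂ → ℂ := fun z => (v z - s) / (1 - conj s * v z)
  have hwd : DifferentiableOn ℂ w (ball 0 1) :=
    (hd.sub_const s).div ((differentiableOn_const 1).sub ((differentiableOn_const _).mul hd)) hden
  have hwm : Set.MapsTo w (ball 0 1) (closedBall (w 0) 1) := fun z hz => by
    rw [show w 0 = 0 by simp [w, s], mem_closedBall_zero_iff]
    exact norm_mobius_le_one hs (hv' z hz)
  have hvd : HasDerivAt v (deriv v 0) 0 :=
    (hd.differentiableAt (isOpen_ball.mem_nhds h0)).hasDerivAt
  have hwderiv : HasDerivAt w (deriv v 0 / ((1 - ‖s‖ ^ 2 : ℝ) : ℂ)) 0 := by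
    refine ((hvd.sub_const s).div ((hvd.const_mul (conj s)).const_sub 1) (hden 0 h0)).congr_deriv ?_
    have : ((1 - ‖s‖ ^ 2 : ℝ) : ℂ) ≠ 0 := by exact_mod_cast hspos.ne'
    rw [show v 0 = s from rfl, sub_self, zero_mul, sub_zero, hs2]
    field_simp
  have hw1 := Complex.norm_deriv_le_one_of_mapsTo_ball hwd hwm one_pos
  rwa [hwderiv.deriv, norm_div, Complex.norm_real, Real.norm_of_nonneg hspos.le,
    div_le_one hspos] at hw1

lemma norm_deriv_dslope_le_one_sub_sq {u : ℂ → ℂ} (hd : DifferentiableOn ℂ u (ball 0 1))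
    (h0 : u 0 = 0) (hu : Set.MapsTo u (ball 0 1) (ball 0 1)) :
    ‖deriv (dslope u 0) 0‖ ≤ 1 - ‖deriv u 0‖ ^ 2 := by
  have hu' : Set.MapsTo u (ball 0 1) (closedBall (u 0) 1) := by
    rw [h0]
    exact hu.mono_right ball_subset_closedBall
  rw [← dslope_same u 0]
  refine norm_deriv_le_one_sub_sq_of_mapsTo_closedBall
    ((differentiableOn_dslope (isOpen_ball.mem_nhds (mem_ball_self one_pos))).mpr hd)
    fun z hz => mem_closedBall_zero_iff.mpr ?_
  simpa using Complex.norm_dslope_le_div_of_mapsTo_ball hd hu' hz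

end Schwarz

section PowerSeries

variable {F : ℂ → ℂ} {p : FormalMultilinearSeries ℂ ℂ ℂ} {x : ℂ}

lemma eq_add_sub_mul_dslope (F : ℂ → ℂ) (x w : ℂ) : F w = F x + (w - x) * dslope F x w := by
  rw [← smul_eq_mul, sub_smul_dslope, add_sub_cancel]

lemma HasFPowerSeriesAt.deriv_eventuallyEq (hp : HasFPowerSeriesAt F p x) :
    deriv F =ᶠ[𝓝 x] fun w => dslope F x w + (w - x) * deriv (dslope F x) w := by
  filter_upwards [hp.has_fpower_series_dslope_fslope.analyticAt.eventually_analyticAt]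
    with w hw
  have hderiv := (((hasDerivAt_id' w).sub_const x).mul hw.differentiableAt.hasDerivAt).const_add
    (F x)
  rw [(hderiv.congr_of_eventuallyEq (.of_forall (eq_add_sub_mul_dslope F x))).deriv, one_mul]

lemma HasFPowerSeriesAt.deriv_deriv (hp : HasFPowerSeriesAt F p x) :
    deriv (deriv F) x = 2 * p.coeff 2 := by
  have hk := hp.has_fpower_series_dslope_fslope
  have hderiv : HasDerivAt (fun w => dslope F x w + (w - x) * deriv (dslope F x) w)
      (deriv (dslope F x) x + (1 * deriv (dslope F x) x + (x - x) * deriv (deriv (dslope F x)) x))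
      x :=
    (hk.analyticAt.differentiableAt.hasDerivAt).add
      (((hasDerivAt_id' x).sub_const x).mul hk.analyticAt.deriv.differentiableAt.hasDerivAt)
  rw [hp.deriv_eventuallyEq.deriv_eq, hderiv.deriv, hk.deriv.trans coeff_fslope]
  ring

lemma HasFPowerSeriesAt.exists_mul_deriv_div_eq (hp : HasFPowerSeriesAt F p 0) (h0 : F 0 = 0)
    (h1 : p.coeff 1 = 1) :
    ∃ G : ℂ → ℂ, G 0 = p.coeff 2 ∧ HasDerivAt G (2 * p.coeff 3 - p.coeff 2 ^ 2) 0 ∧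
      ∀ᶠ z in 𝓝[≠] 0, z * deriv F z / F z = 1 + z * G z := by
  have hh : HasFPowerSeriesAt (dslope F 0) p.fslope 0 := hp.has_fpower_series_dslope_fslope
  have hh0 : dslope F 0 0 = 1 := by rw [dslope_same, hp.deriv]; exact h1
  have hh' : deriv (dslope F 0) 0 = p.coeff 2 := hh.deriv.trans coeff_fslope
  have hh'' : deriv (deriv (dslope F 0)) 0 = 2 * p.coeff 3 := by
    rw [hh.deriv_deriv, coeff_fslope]
  refine ⟨fun z => deriv (dslope F 0) z / dslope F 0 z, by simp only [hh', hh0, div_one], ?_, ?_⟩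
  · refine ((hh.analyticAt.deriv.differentiableAt.hasDerivAt).div
      hh.analyticAt.differentiableAt.hasDerivAt (hh0 ▸ one_ne_zero)).congr_deriv ?_
    rw [hh0, hh', hh'']
    ring
  · have hne : ∀ᶠ z in 𝓝 (0 : ℂ), dslope F 0 z ≠ 0 :=
      hh.analyticAt.continuousAt.eventually_ne (hh0 ▸ one_ne_zero)
    filter_upwards [nhdsWithin_le_nhds (hp.deriv_eventuallyEq.and hne),
      self_mem_nhdsWithin] with z ⟨hderiv, hz⟩ (hz0 : z ≠ 0)
    rw [hderiv, eq_add_sub_mul_dslope F 0 z, h0, sub_zero]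
    field_simp
    ring

end PowerSeries

lemma AnalyticAt.exists_mobius_comp_eq {u : ℂ → ℂ} (hu : AnalyticAt ℂ u 0) (hu0 : u 0 = 0)
    (A B : ℂ) :
    ∃ G : ℂ → ℂ, G 0 = (A - B) * deriv u 0 ∧
      HasDerivAt G ((A - B) * deriv (dslope u 0) 0 - B * (A - B) * deriv u 0 ^ 2) 0 ∧
      ∀ᶠ z in 𝓝 0, (1 + A * u z) / (1 + B * u z) = 1 + z * G z := by
  obtain ⟨p, hp⟩ := hu
  have hv := hp.has_fpower_series_dslope_fslope.analyticAt
  have hden : HasDerivAt (fun z => 1 + B * u z) (B * deriv u 0) 0 :=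
    (hp.differentiableAt.hasDerivAt.const_mul B).const_add 1
  have hden0 : 1 + B * u 0 = 1 := by rw [hu0, mul_zero, add_zero]
  have hden0' : 1 + B * u 0 ≠ 0 := by rw [hden0]; exact one_ne_zero
  refine ⟨fun z => (A - B) * dslope u 0 z / (1 + B * u z), ?_, ?_, ?_⟩
  · simp only [hden0, dslope_same, div_one]
  · refine ((hv.differentiableAt.hasDerivAt.const_mul (A - B)).div hden hden0').congr_deriv ?_
    rw [hden0, dslope_same]
    ring
  · filter_upwards [hden.continuousAt.eventually_ne hden0'] with z hz
    rw [eq_add_sub_mul_dslope u 0 z, hu0, sub_zero, zero_add] at hz ⊢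
    rw [mul_div_assoc', ← mul_assoc, eq_comm, one_add_div hz]
    ring

lemma eq_and_eq_of_eventually_one_add_mul_eq {G₁ G₂ : ℂ → ℂ} {d₁ d₂ : ℂ}
    (h₁ : HasDerivAt G₁ d₁ 0) (h₂ : HasDerivAt G₂ d₂ 0)
    (h : ∀ᶠ z in 𝓝[≠] 0, 1 + z * G₁ z = 1 + z * G₂ z) : G₁ 0 = G₂ 0 ∧ d₁ = d₂ := by
  have hne : G₁ =ᶠ[𝓝[≠] 0] G₂ := by
    filter_upwards [h, self_mem_nhdsWithin] with z hz (hz0 : z ≠ 0)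
    exact mul_left_cancel₀ hz0 (add_left_cancel hz)
  have heq := (h₁.continuousAt.eventuallyEq_nhds_iff_eventuallyEq_nhdsNE h₂.continuousAt).mp hne
  exact ⟨heq.eq_of_nhds, h₁.unique (h₂.congr_of_eventuallyEq heq)⟩

section Cdel

variable {δ : ℝ}

lemma Cdel_zero : Cdel δ 0 = 0 := by
  simp [Cdel]

lemma Cdel_one (hδ : -1 < δ) : Cdel δ 1 = 1 := by
  have : Real.Gamma (1 + δ) ≠ 0 := (Real.Gamma_pos_of_pos (by linarith)).ne'
  rw [Cdel, Nat.cast_one, Real.Gamma_one, one_mul, add_comm δ, div_self this]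

lemma Cdel_succ (hδ : -1 < δ) {n : ℕ} (hn : n ≠ 0) :
    Cdel δ (n + 1) = (n + δ) / n * Cdel δ n := by
  have hn' : (0 : ℝ) < n := by positivity
  have hΓ₁ : Real.Gamma n ≠ 0 := (Real.Gamma_pos_of_pos hn').ne'
  have hΓ₂ : Real.Gamma (δ + 1) ≠ 0 := (Real.Gamma_pos_of_pos (by linarith)).ne'
  have hnδ : (n : ℝ) + δ ≠ 0 := by
    have : (1 : ℝ) ≤ n := by exact_mod_cast Nat.one_le_iff_ne_zero.mpr hn
    linarith
  rw [Cdel, Cdel, Nat.cast_succ, add_right_comm, Real.Gamma_add_one hnδ,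
    Real.Gamma_add_one hn'.ne']
  field_simp

lemma Cdel_pos (hδ : -1 < δ) {n : ℕ} (hn : n ≠ 0) : 0 < Cdel δ n := by
  have hn' : (1 : ℝ) ≤ n := by exact_mod_cast Nat.one_le_iff_ne_zero.mpr hn
  exact div_pos (Real.Gamma_pos_of_pos (by linarith))
    (mul_pos (Real.Gamma_pos_of_pos (by linarith)) (Real.Gamma_pos_of_pos (by linarith)))

lemma Cdel_nonneg (hδ : -1 < δ) (n : ℕ) : 0 ≤ Cdel δ n := by
  rcases eq_or_ne n 0 with rfl | hn
  · rw [Cdel_zero]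
  · exact (Cdel_pos hδ hn).le

lemma Cdel_two (hδ : -1 < δ) : Cdel δ 2 = 1 + δ := by
  rw [Cdel_succ hδ one_ne_zero, Cdel_one hδ]
  ring

lemma Cdel_three (hδ : -1 < δ) : Cdel δ 3 = (1 + δ) * (2 + δ) / 2 := by
  rw [Cdel_succ hδ two_ne_zero, Cdel_two hδ]
  ring

lemma two_mul_Cdel_three_sub_Cdel_two_sq (hδ : -1 < δ) :
    2 * Cdel δ 3 - Cdel δ 2 ^ 2 = 1 + δ := by
  rw [Cdel_three hδ, Cdel_two hδ]
  ring

lemma Cdel_le_pow (hδ : 0 ≤ δ) : ∀ n : ℕ, Cdel δ n ≤ (1 + δ) ^ n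
  | 0 => by simp [Cdel_zero]
  | 1 => by rw [Cdel_one (by linarith), pow_one]; linarith
  | n + 2 => by
    have hratio : ((n + 1 : ℕ) + δ) / (n + 1 : ℕ) ≤ 1 + δ := by
      push_cast
      rw [div_le_iff₀ (by positivity)]
      nlinarith
    rw [Cdel_succ (by linarith) (Nat.succ_ne_zero n), pow_succ']
    exact mul_le_mul hratio (Cdel_le_pow hδ (n + 1)) (Cdel_pos (by linarith) n.succ_ne_zero).le
      (by positivity)

end Cdel

lemma exists_norm_mul_pow_le_of_summable {a : ℕ → ℂ} {z : ℂ}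
    (h : Summable fun n => a n * z ^ n) : ∃ M, ∀ n, ‖a n‖ * ‖z‖ ^ n ≤ M := by
  obtain ⟨M, hM⟩ := h.tendsto_atTop_zero.norm.bddAbove_range
  exact ⟨M, fun n => by simpa [norm_mul, norm_pow] using hM (Set.mem_range_self n)⟩

lemma le_radius_ofScalars_of_bound {e : ℕ → ℂ} {r M : ℝ} (hr : 0 ≤ r)
    (h : ∀ n, ‖e n‖ * r ^ n ≤ M) : ENNReal.ofReal r ≤ (ofScalars ℂ e).radius :=
  (ofScalars ℂ e).le_radius_of_bound M fun n => by
    rw [ofScalars_norm, Real.coe_toNNReal r hr]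
    exact h n

section Dop

variable {lam al be δ : ℝ} {f : ℂ → ℂ} {a : ℕ → ℂ}

lemma Dop_apply_zero (k : ℕ) : Dop lam al be δ k a 0 = 0 := by
  rw [Dop, zero_add]
  refine (tsum_congr fun n => ?_).trans tsum_zero
  split_ifs with h
  · rw [zero_pow (by omega), mul_zero]
  · rfl

lemma Dop_eq_of_hasSum (hδ : -1 < δ) (ha0 : a 0 = 0) (ha1 : a 1 = 1) {z s : ℂ}
    (hs : HasSum (fun n => (Cdel δ n : ℂ) * a n * z ^ n) s) : Dop lam al be δ 0 a z = s := by
  have hterms : (fun n => if 2 ≤ n then (Ups lam al be 0 n : ℂ) * Cdel δ n * a n * z ^ n else 0)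
      = fun n => (Cdel δ n : ℂ) * a n * z ^ n - if n = 1 then z else 0 := by
    funext n
    rcases n with _ | _ | n
    · simp [ha0]
    · simp [ha1, Cdel_one hδ]
    · simp [Ups]
  rw [Dop, hterms, (hs.sub (hasSum_ite_eq 1 z)).tsum_eq]
  ring

lemma hasFPowerSeriesAt_Dop (hδ : 0 ≤ δ) (ha : IsInA f a) :
    HasFPowerSeriesAt (Dop lam al be δ 0 a) (ofScalars ℂ fun n => (Cdel δ n : ℂ) * a n) 0 := by
  obtain ⟨-, ha0, ha1, hsum⟩ := ha
  set e : ℕ → ℂ := fun n => (Cdel δ n : ℂ) * a n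
  obtain ⟨M, hM⟩ := exists_norm_mul_pow_le_of_summable
    (hsum 2⁻¹ (by simp [unitDisk]; norm_num)).summable
  set r : ℝ := (2 * (1 + δ))⁻¹
  have hr : 0 < r := by positivity
  have hbound : ∀ n, ‖e n‖ * r ^ n ≤ M := fun n => by
    have hCdel : ‖(Cdel δ n : ℂ)‖ ≤ (1 + δ) ^ n := by
      rw [Complex.norm_real, Real.norm_of_nonneg (Cdel_nonneg (by linarith) n)]
      exact Cdel_le_pow hδ n
    have hr2 : (1 + δ) * r = ‖(2⁻¹ : ℂ)‖ := by
      simp only [r, norm_inv, Complex.norm_ofNat]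
      field_simp
    calc ‖e n‖ * r ^ n = ‖(Cdel δ n : ℂ)‖ * ‖a n‖ * r ^ n := by rw [norm_mul]
      _ ≤ (1 + δ) ^ n * ‖a n‖ * r ^ n := by gcongr
      _ = ‖a n‖ * ‖(2⁻¹ : ℂ)‖ ^ n := by rw [← hr2, mul_pow]; ring
      _ ≤ M := hM n
  have hpos := (ENNReal.ofReal_pos.mpr hr).trans_le (le_radius_ofScalars_of_bound hr.le hbound)
  have hball := (ofScalars ℂ e).hasFPowerSeriesOnBall hpos
  refine hball.hasFPowerSeriesAt.congr ?_
  filter_upwards [Metric.eball_mem_nhds (0 : ℂ) hpos] with z hz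
  refine (Dop_eq_of_hasSum (by linarith) ha0 ha1 ?_).symm
  simpa [e, ofScalars_apply_eq, mul_comm, mul_left_comm] using hball.hasSum hz

end Dop

/-- The relations that subordination to `(1 + A z)/(1 + B z)` imposes on the second and third
coefficients of `Df`, with `K = A - B`, `Cₙ = C(δ,n)`, and `c₁ = u'(0)`, `c₂ = u''(0)/2` for the
Schwarz function `u`. -/
def SubordCoeffs (K B C₂ C₃ : ℝ) (a₂ a₃ : ℂ) : Prop :=
  ∃ c₁ c₂ : ℂ, ‖c₂‖ ≤ 1 - ‖c₁‖ ^ 2 ∧ (C₂ : ℂ) * a₂ = K * c₁ ∧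
    2 * (C₃ : ℂ) * a₃ - (C₂ * a₂) ^ 2 = K * c₂ - B * K * c₁ ^ 2

lemma subordCoeffs_of_subord {lam al be δ A B : ℝ} (hδ : 0 ≤ δ) {f : ℂ → ℂ} {a : ℕ → ℂ}
    (ha : IsInA f a)
    (hsub : Subord (bazFun 0 (Dop lam al be δ 0 a)) fun z => (1 + A * z) / (1 + B * z)) :
    SubordCoeffs (A - B) B (Cdel δ 2) (Cdel δ 3) (a 2) (a 3) := by
  obtain ⟨u, hu, hu0, hu1, hsub⟩ := hsub
  have hp := hasFPowerSeriesAt_Dop (lam := lam) (al := al) (be := be) hδ ha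
  obtain ⟨-, -, ha1, -⟩ := ha
  obtain ⟨G₁, hG₁0, hG₁', hG₁⟩ := hp.exists_mul_deriv_div_eq (Dop_apply_zero 0)
    (by rw [coeff_ofScalars, Cdel_one (by linarith), ha1, Complex.ofReal_one, one_mul])
  obtain ⟨G₂, hG₂0, hG₂', hG₂⟩ := (hu 0 (mem_ball_self one_pos)).exists_mobius_comp_eq hu0 A B
  obtain ⟨h₁, h₂⟩ := eq_and_eq_of_eventually_one_add_mul_eq hG₁' hG₂' (by
    filter_upwards [hG₁, nhdsWithin_le_nhds hG₂,
      nhdsWithin_le_nhds (ball_mem_nhds (0 : ℂ) one_pos), self_mem_nhdsWithin]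
      with z hG₁z hG₂z hz (hz0 : z ≠ 0)
    rw [← hG₁z, ← hG₂z]
    simpa [bazFun, hz0] using hsub z hz)
  refine ⟨deriv u 0, deriv (dslope u 0) 0,
    norm_deriv_dslope_le_one_sub_sq hu.differentiableOn hu0 fun z hz => mem_ball_zero_iff.mpr
      (hu1 z hz), ?_, ?_⟩
  · push_cast
    rw [← hG₂0, ← h₁, hG₁0, coeff_ofScalars]
  · simp only [coeff_ofScalars] at h₂
    push_cast
    linear_combination h₂

namespace SubordCoeffs

variable {K B C₂ C₃ : ℝ} {a₂ a₃ : ℂ}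

lemma norm_sq_mul_le (hK : 0 < K) (hB : -1 ≤ B) (hC : 0 ≤ 2 * C₃ - C₂ ^ 2)
    (h : SubordCoeffs K B C₂ C₃ a₂ a₃) (h' : SubordCoeffs K B C₂ C₃ (-a₂) (2 * a₂ ^ 2 - a₃)) :
    ‖a₂‖ ^ 2 * (K * (2 * C₃ - C₂ ^ 2) + (B + 1) * C₂ ^ 2) ≤ K ^ 2 := by
  obtain ⟨c₁, c₂, hc, h₁, h₂⟩ := h
  obtain ⟨d₁, d₂, hd, h₁', h₂'⟩ := h'
  have hsum : ((2 * (K * (2 * C₃ - C₂ ^ 2) + (B + 1) * C₂ ^ 2) : ℝ) : ℂ) * a₂ ^ 2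
      = ((K ^ 2 : ℝ) : ℂ) * ((c₂ + c₁ ^ 2) + (d₂ + d₁ ^ 2)) := by
    push_cast
    linear_combination K * h₂ + K * h₂' + (1 + B) * (C₂ * a₂ + K * c₁) * h₁
      + (1 + B) * (C₂ * -a₂ + K * d₁) * h₁'
  have hbound : ‖(c₂ + c₁ ^ 2) + (d₂ + d₁ ^ 2)‖ ≤ 2 := by
    calc ‖(c₂ + c₁ ^ 2) + (d₂ + d₁ ^ 2)‖ ≤ (‖c₂‖ + ‖c₁‖ ^ 2) + (‖d₂‖ + ‖d₁‖ ^ 2) := by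
          refine (norm_add_le _ _).trans (add_le_add ?_ ?_) <;>
            exact (norm_add_le _ _).trans_eq (by rw [norm_pow])
      _ ≤ 2 := by linarith
  have hT : 0 ≤ K * (2 * C₃ - C₂ ^ 2) + (B + 1) * C₂ ^ 2 :=
    add_nonneg (mul_nonneg hK.le hC) (mul_nonneg (by linarith) (sq_nonneg C₂))
  have := congrArg norm hsum
  rw [norm_mul, norm_mul, norm_pow, Complex.norm_of_nonneg (by positivity),
    Complex.norm_of_nonneg (by positivity)] at this
  nlinarith [norm_nonneg ((c₂ + c₁ ^ 2) + (d₂ + d₁ ^ 2))]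

lemma norm_le_div_sqrt (hK : 0 < K) (hB : -1 ≤ B) (hC : 0 ≤ 2 * C₃ - C₂ ^ 2)
    (hD : K * (2 * C₃ - C₂ ^ 2) - (B + 1) * C₂ ^ 2 ≠ 0)
    (h : SubordCoeffs K B C₂ C₃ a₂ a₃) (h' : SubordCoeffs K B C₂ C₃ (-a₂) (2 * a₂ ^ 2 - a₃)) :
    ‖a₂‖ ≤ K / √|K * (2 * C₃ - C₂ ^ 2) - (B + 1) * C₂ ^ 2| := by
  set D := K * (2 * C₃ - C₂ ^ 2) - (B + 1) * C₂ ^ 2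
  have hDle : |D| ≤ K * (2 * C₃ - C₂ ^ 2) + (B + 1) * C₂ ^ 2 := by
    have := mul_nonneg (by linarith : 0 ≤ B + 1) (sq_nonneg C₂)
    have := mul_nonneg hK.le hC
    rw [abs_le]
    constructor <;> linarith
  have hsq : ‖a₂‖ ^ 2 ≤ (K / √|D|) ^ 2 := by
    rw [div_pow, Real.sq_sqrt (abs_nonneg D), le_div_iff₀ (abs_pos.mpr hD)]
    exact (mul_le_mul_of_nonneg_left hDle (sq_nonneg _)).trans (norm_sq_mul_le hK hB hC h h')
  exact (pow_le_pow_iff_left₀ (norm_nonneg _) (by positivity) two_ne_zero).mp hsq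

lemma norm_le_div_add_div_sq (hK : 0 < K) (hC₂ : 0 < C₂) (hC₃ : 0 < C₃)
    (h : SubordCoeffs K B C₂ C₃ a₂ a₃) (h' : SubordCoeffs K B C₂ C₃ (-a₂) (2 * a₂ ^ 2 - a₃)) :
    ‖a₃‖ ≤ K / (2 * C₃) + (K / C₂) ^ 2 := by
  obtain ⟨c₁, c₂, hc, h₁, h₂⟩ := h
  obtain ⟨d₁, d₂, hd, h₁', h₂'⟩ := h'
  have hd₁ : d₁ = -c₁ := mul_left_cancel₀ (Complex.ofReal_ne_zero.mpr hK.ne') (by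
    linear_combination -h₁' - h₁)
  have ha₃ : a₃ = a₂ ^ 2 + K * (c₂ - d₂) / (4 * C₃) := by
    have : (C₃ : ℂ) ≠ 0 := Complex.ofReal_ne_zero.mpr hC₃.ne'
    field_simp
    linear_combination h₂ - h₂' + B * K * (d₁ - c₁) * hd₁
  have ha₂ : ‖a₂‖ ≤ K / C₂ := by
    have hc₁ : ‖c₁‖ ≤ 1 := by nlinarith [norm_nonneg c₁, norm_nonneg c₂]
    have := congrArg norm h₁
    rw [norm_mul, norm_mul, Complex.norm_of_nonneg hC₂.le, Complex.norm_of_nonneg hK.le] at this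
    rw [le_div_iff₀ hC₂, mul_comm, this]
    exact mul_le_of_le_one_right hK.le hc₁
  have hcd : ‖c₂ - d₂‖ ≤ 2 := by
    linarith [norm_sub_le c₂ d₂, sq_nonneg ‖c₁‖, sq_nonneg ‖d₁‖]
  calc ‖a₃‖ ≤ ‖a₂‖ ^ 2 + K * ‖c₂ - d₂‖ / (4 * C₃) := by
        rw [ha₃]
        refine (norm_add_le _ _).trans_eq ?_
        rw [norm_pow, norm_div, norm_mul, norm_mul, Complex.norm_of_nonneg hK.le,
          Complex.norm_of_nonneg hC₃.le]
        norm_num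
    _ ≤ (K / C₂) ^ 2 + K * 2 / (4 * C₃) := by gcongr
    _ = K / (2 * C₃) + (K / C₂) ^ 2 := by ring

end SubordCoeffs

theorem cor_3_4_general (α β lam δ : ℝ)
    (hδ : 0 ≤ δ)
    (A B' : ℝ) (hB'1 : -1 ≤ B') (hBA : B' < A)
    (f g : ℂ → ℂ) (a b : ℕ → ℂ)
    (hmem : MemB lam α β δ 0 0 (fun z : ℂ => (1 + (A : ℂ) * z) / (1 + (B' : ℂ) * z)) f g a b)
    (hden : (A - B') * (2 * Cdel δ 3 - Cdel δ 2 ^ 2) - (B' + 1) * Cdel δ 2 ^ 2 ≠ 0) :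
    ‖a 2‖ ≤ (A - B') /
      Real.sqrt |(A - B') * (2 * Cdel δ 3 - Cdel δ 2 ^ 2) - (B' + 1) * Cdel δ 2 ^ 2| ∧
    ‖a 3‖ ≤ (A - B') / (2 * Cdel δ 3) + ((A - B') / Cdel δ 2) ^ 2 := by
  obtain ⟨hf, -, hg, -, -, hb₂, hb₃, -, -, hsubf, hsubg⟩ := hmem
  have ha := subordCoeffs_of_subord hδ hf hsubf
  have hb := subordCoeffs_of_subord hδ hg hsubg
  rw [hb₂, hb₃] at hb
  have hK : 0 < A - B' := sub_pos.mpr hBA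
  have hδ' : -1 < δ := by linarith
  refine ⟨ha.norm_le_div_sqrt hK hB'1 ?_ hden hb,
    ha.norm_le_div_add_div_sq hK (Cdel_pos hδ' two_ne_zero) (Cdel_pos hδ' three_ne_zero) hb⟩
  rw [two_mul_Cdel_three_sub_Cdel_two_sq hδ']
  linarith

theorem cor_3_4 (α β lam δ : ℝ)
    (hα0 : 0 < α) (hα1 : α ≤ 1) (hβ0 : 0 < β) (hβ1 : β ≤ 1)
    (hlam : 0 ≤ lam) (hδ : 0 ≤ δ)
    (A B' : ℝ) (hB'1 : -1 ≤ B') (hBA : B' < A) (hA1 : A ≤ 1)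
    (f g : ℂ → ℂ) (a b : ℕ → ℂ)
    (hmem : MemB lam α β δ 0 0 (fun z : ℂ => (1 + (A : ℂ) * z) / (1 + (B' : ℂ) * z)) f g a b)
    (hden : (A - B') * (2 * Cdel δ 3 - Cdel δ 2 ^ 2) - (B' + 1) * Cdel δ 2 ^ 2 ≠ 0) :
    ‖a 2‖ ≤ (A - B') /
      Real.sqrt |(A - B') * (2 * Cdel δ 3 - Cdel δ 2 ^ 2) - (B' + 1) * Cdel δ 2 ^ 2| ∧
    ‖a 3‖ ≤ (A - B') / (2 * Cdel δ 3) + ((A - B') / Cdel δ 2) ^ 2 :=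
  cor_3_4_general α β lam δ hδ A B' hB'1 hBA f g a b hmem hden
end
end
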